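/- Let u be a finite set of bimodal formulas and w a CCS of u. Suppose (T_i)_{0≤i≤N} is a sequence of d(w)-windows for w such that for all i < N, T_{i+1} continues T_i, and suppose N is at least the (finite) number of distinct d(w)-windows for w, so that some window repeats: T_h = T_{h+δ} for some h and some δ ≠ 0 with h + δ ≤ N. Then there exists an ∞-window for w. -/
import Mathlib


/-- Formulas of bimodal modal logic. -/
inductive BFormula : Type
  | atom : ℕ → BFormula
  | falsum : BFormula
  | neg : BFormula → BFormula
  | and : BFormula → BFormula → BFormula
  | boxa : BFormula → BFormula
  | boxb : BFormula → BFormula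
deriving DecidableEq

/-- `CSF(w)`: the least set of formulas containing `w` and closed under the classical
decomposition rules. -/
inductive CSF (w : Set BFormula) : BFormula → Prop
  | base {φ} : φ ∈ w → CSF w φ
  | andl {φ ψ} : CSF w (.and φ ψ) → CSF w φ
  | andr {φ ψ} : CSF w (.and φ ψ) → CSF w ψ
  | negandl {φ ψ} : CSF w (.neg (.and φ ψ)) → CSF w (.neg φ)
  | negandr {φ ψ} : CSF w (.neg (.and φ ψ)) → CSF w (.neg ψ)
  | negE {φ} : CSF w (.neg φ) → CSF w φ

/-- `w ∈ CCS(u)`: `w` is a consistent classical saturation of `u`, i.e. a finite set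
with `u ⊆ w ⊆ CSF(u)`, closed under the classical saturation rules, not containing
`⊥`, and not containing both a formula and its negation. -/
def CCS (u w : Set BFormula) : Prop :=
  w.Finite ∧ u ⊆ w ∧ (∀ φ ∈ w, CSF u φ) ∧
  (∀ φ ψ : BFormula, BFormula.and φ ψ ∈ w → φ ∈ w ∧ ψ ∈ w) ∧
  (∀ φ ψ : BFormula, BFormula.neg (.and φ ψ) ∈ w →
    BFormula.neg φ ∈ w ∨ BFormula.neg ψ ∈ w) ∧
  (∀ φ : BFormula, BFormula.neg (.neg φ) ∈ w → φ ∈ w) ∧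
  BFormula.falsum ∉ w ∧
  (∀ φ : BFormula, BFormula.neg φ ∈ w → φ ∉ w)

/-- The modal degree of a bimodal formula. -/
def deg : BFormula → ℕ
  | .atom _ => 0
  | .falsum => 0
  | .neg φ => deg φ
  | .and φ ψ => max (deg φ) (deg ψ)
  | .boxa φ => deg φ + 1
  | .boxb φ => deg φ + 1

/-- The maximal modal degree of a set of formulas. -/
noncomputable def degS (w : Set BFormula) : ℕ := sSup (deg '' w)

/-- `□_a⁻(w) := {φ : □_aφ ∈ w}`. -/
def boxaInv (w : Set BFormula) : Set BFormula := {φ | BFormula.boxa φ ∈ w}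

/-- `□_b⁻(w) := {φ : □_bφ ∈ w}`. -/
def boxbInv (w : Set BFormula) : Set BFormula := {φ | BFormula.boxb φ ∈ w}

/-- A `k`-window for `w`: a sequence `(ws 0, …, ws k)` with `ws k ∈ CCS(□_a⁻(w))`
and `ws i ∈ CCS(□_a⁻(w) ∪ □_b⁻(ws (i+1)))` for `0 ≤ i < k`. -/
def IsWindow (w : Set BFormula) (k : ℕ) (ws : ℕ → Set BFormula) : Prop :=
  CCS (boxaInv w) (ws k) ∧
  ∀ i < k, CCS (boxaInv w ∪ boxbInv (ws (i + 1))) (ws i)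

/-- `T₁ = (w̃_1,…,w̃_{k+1})` continues `T₀ = (w_0,…,w_k)` for `w`: both are
`k`-windows for `w` (the entry `w̃_{j+1}` of `T₁` being encoded as `ws1 j`) and for
all `1 ≤ i ≤ k`, `w̃_i ∈ CCS(□_b⁻(w̃_{i+1}) ∪ w_i)`. -/
def Continues (w : Set BFormula) (k : ℕ) (ws0 ws1 : ℕ → Set BFormula) : Prop :=
  IsWindow w k ws0 ∧ IsWindow w k ws1 ∧
  ∀ i : ℕ, 1 ≤ i → i ≤ k → CCS (boxbInv (ws1 i) ∪ ws0 i) (ws1 (i - 1))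

/-- An `∞`-window for `w`: an infinite sequence `(ws i)_{i≥0}` with
`ws i ∈ CCS(□_a⁻(w) ∪ □_b⁻(ws (i+1)))` for all `i`. -/
def IsInfWindow (w : Set BFormula) (ws : ℕ → Set BFormula) : Prop :=
  ∀ i : ℕ, CCS (boxaInv w ∪ boxbInv (ws (i + 1))) (ws i)

/- ----------------------------------------------------------------------- -/
/- Auxiliary material for the proof. -/

lemma csf_mono {u v : Set BFormula} (huv : u ⊆ v) : ∀ {φ}, CSF u φ → CSF v φ := by
  intro φ hφ
  induction hφ with
  | base h => exact CSF.base (huv h)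
  | andl _ ih => exact CSF.andl ih
  | andr _ ih => exact CSF.andr ih
  | negandl _ ih => exact CSF.negandl ih
  | negandr _ ih => exact CSF.negandr ih
  | negE _ ih => exact CSF.negE ih

lemma deg_le_degS {w : Set BFormula} (hfin : w.Finite) {φ} (hφ : φ ∈ w) :
    deg φ ≤ degS w :=
  le_csSup (hfin.image deg).bddAbove ⟨φ, hφ, rfl⟩

/-- The diagonal grid entry at "time" `q`, position `i` (for `i ≤ k`). -/
def Egrid (S : ℕ → ℕ → Set BFormula) (k q i : ℕ) : Set BFormula :=
  S (q + (k - i)) i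

/-- The degree-stratified diagonal set. -/
def Ywin (S : ℕ → ℕ → Set BFormula) (k q : ℕ) : Set BFormula :=
  {φ | deg φ + 1 ≤ k ∧ φ ∈ Egrid S k q (deg φ + 1)}

/-- The decreasing repair iteration. -/
def Zit (A : Set BFormula) (Y : ℕ → Set BFormula) : ℕ → ℕ → Set BFormula
  | 0 => Y
  | n + 1 => fun q => Zit A Y n q ∩ {φ | CSF (A ∪ boxbInv (Zit A Y n (q + 1))) φ}

/-- Core lemma: an infinite sequence of windows, each continuing the previous one,
yields an infinite window. Stated abstractly over the base set `A` and length `k`. -/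
lemma windows_to_inf (k : ℕ) (A : Set BFormula)
    (hdegA : ∀ φ ∈ A, deg φ + 1 ≤ k)
    (S : ℕ → ℕ → Set BFormula)
    (htop : ∀ j, CCS A (S j k))
    (hwinS : ∀ j i, i < k → CCS (A ∪ boxbInv (S j (i + 1))) (S j i))
    (hcontS : ∀ j i, 1 ≤ i → i ≤ k → CCS (boxbInv (S (j + 1) i) ∪ S j i) (S (j + 1) (i - 1))) :
    ∃ ws : ℕ → Set BFormula, ∀ q, CCS (A ∪ boxbInv (ws (q + 1))) (ws q) := by
  classical
  set Y : ℕ → Set BFormula := Ywin S k with hYdef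
  -- every grid entry is a CCS over a base containing A
  have hccsE : ∀ j i, i ≤ k → ∃ v, A ⊆ v ∧ CCS v (S j i) := by
    intro j i hik
    rcases Nat.lt_or_ge i k with hlt | hge
    · exact ⟨A ∪ boxbInv (S j (i + 1)), Set.subset_union_left, hwinS j i hlt⟩
    · have : i = k := le_antisymm hik hge
      subst this
      exact ⟨A, subset_rfl, htop j⟩
  have hAsub : ∀ j i, i ≤ k → A ⊆ S j i := by
    intro j i hik
    obtain ⟨v, hAv, hccs⟩ := hccsE j i hik
    exact hAv.trans hccs.2.1
  -- box-stripping inside a window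
  have hstrip : ∀ j i, i < k → ∀ χ, BFormula.boxb χ ∈ S j (i + 1) → χ ∈ S j i := by
    intro j i hik χ hχ
    exact (hwinS j i hik).2.1 (Set.mem_union_right _ hχ)
  -- shifting along the continuation
  have hshift : ∀ j i, 1 ≤ i → i ≤ k → S j i ⊆ S (j + 1) (i - 1) := by
    intro j i h1 h2 φ hφ
    exact (hcontS j i h1 h2).2.1 (Set.mem_union_right _ hφ)
  -- the nested chain property of E
  have hEstep : ∀ q i, i < k → Egrid S k q (i + 1) ⊆ Egrid S k q i := by
    intro q i hik
    have h1 := hshift (q + (k - (i + 1))) (i + 1) (by omega) (by omega)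
    rw [show i + 1 - 1 = i by omega,
        show q + (k - (i + 1)) + 1 = q + (k - i) by omega] at h1
    exact h1
  have hEmono : ∀ q i i', i ≤ i' → i' ≤ k → Egrid S k q i' ⊆ Egrid S k q i := by
    intro q i i' hii' hik
    induction i' with
    | zero =>
      have : i = 0 := by omega
      subst this; exact subset_rfl
    | succ n ih =>
      rcases Nat.lt_or_ge i (n + 1) with hl | hg
      · exact (hEstep q n (by omega)).trans (ih (by omega) (by omega))
      · have : i = n + 1 := by omega
        subst this; exact subset_rfl
  have hEccs : ∀ q i, i ≤ k → ∃ v, A ⊆ v ∧ CCS v (Egrid S k q i) := by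
    intro q i hik
    exact hccsE _ i hik
  -- Y lemmas
  have hYE0 : ∀ q, Y q ⊆ Egrid S k q 0 := by
    intro q φ hφ
    obtain ⟨h1, h2⟩ : deg φ + 1 ≤ k ∧ φ ∈ Egrid S k q (deg φ + 1) := hφ
    exact hEmono q 0 (deg φ + 1) (Nat.zero_le _) h1 h2
  have hYA : ∀ q, A ⊆ Y q := by
    intro q φ hφ
    have hd : deg φ + 1 ≤ k := hdegA φ hφ
    exact ⟨hd, hAsub _ _ hd hφ⟩
  have hYb : ∀ q χ, BFormula.boxb χ ∈ Y (q + 1) → χ ∈ Y q := by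
    intro q χ hχ
    obtain ⟨h1, h2⟩ : deg (BFormula.boxb χ) + 1 ≤ k ∧
        BFormula.boxb χ ∈ Egrid S k (q + 1) (deg (BFormula.boxb χ) + 1) := hχ
    have hd : deg χ + 1 + 1 ≤ k := by simpa [deg] using h1
    have h2' : BFormula.boxb χ ∈ S (q + 1 + (k - (deg χ + 1 + 1))) (deg χ + 1 + 1) := by
      simpa [Egrid, deg] using h2
    have h4 := hstrip _ (deg χ + 1) (by omega) χ h2'
    rw [show q + 1 + (k - (deg χ + 1 + 1)) = q + (k - (deg χ + 1)) by omega] at h4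
    exact ⟨by omega, h4⟩
  have hYand : ∀ q φ ψ, BFormula.and φ ψ ∈ Y q → φ ∈ Y q ∧ ψ ∈ Y q := by
    intro q φ ψ hm
    obtain ⟨h1, h2⟩ : deg (BFormula.and φ ψ) + 1 ≤ k ∧
        BFormula.and φ ψ ∈ Egrid S k q (deg (BFormula.and φ ψ) + 1) := hm
    obtain ⟨v, hAv, hccs⟩ := hEccs q (deg (BFormula.and φ ψ) + 1) h1
    obtain ⟨hφ, hψ⟩ := hccs.2.2.2.1 φ ψ h2
    have hdφ : deg φ ≤ deg (BFormula.and φ ψ) := by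
      simp only [deg]; exact le_max_left _ _
    have hdψ : deg ψ ≤ deg (BFormula.and φ ψ) := by
      simp only [deg]; exact le_max_right _ _
    constructor
    · exact ⟨by omega, hEmono q (deg φ + 1) _ (by omega) h1 hφ⟩
    · exact ⟨by omega, hEmono q (deg ψ + 1) _ (by omega) h1 hψ⟩
  have hYnn : ∀ q φ, BFormula.neg (BFormula.neg φ) ∈ Y q → φ ∈ Y q := by
    intro q φ hm
    obtain ⟨h1, h2⟩ : deg (BFormula.neg (BFormula.neg φ)) + 1 ≤ k ∧
        BFormula.neg (BFormula.neg φ) ∈ Egrid S k q (deg (BFormula.neg (BFormula.neg φ)) + 1) := hm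
    obtain ⟨v, hAv, hccs⟩ := hEccs q _ h1
    have hφ := hccs.2.2.2.2.2.1 φ h2
    have hd : deg (BFormula.neg (BFormula.neg φ)) = deg φ := by simp [deg]
    rw [hd] at h1 hφ
    exact ⟨h1, hφ⟩
  have hYna : ∀ q φ ψ, BFormula.neg (BFormula.and φ ψ) ∈ Y q →
      BFormula.neg φ ∈ Y q ∨ BFormula.neg ψ ∈ Y q := by
    intro q φ ψ hm
    obtain ⟨h1, h2⟩ : deg (BFormula.neg (BFormula.and φ ψ)) + 1 ≤ k ∧
        BFormula.neg (BFormula.and φ ψ) ∈ Egrid S k q (deg (BFormula.neg (BFormula.and φ ψ)) + 1) := hm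
    obtain ⟨v, hAv, hccs⟩ := hEccs q _ h1
    have hdφ : deg (BFormula.neg φ) ≤ deg (BFormula.neg (BFormula.and φ ψ)) := by
      simp only [deg]; exact le_max_left _ _
    have hdψ : deg (BFormula.neg ψ) ≤ deg (BFormula.neg (BFormula.and φ ψ)) := by
      simp only [deg]; exact le_max_right _ _
    rcases hccs.2.2.2.2.1 φ ψ h2 with hwit | hwit
    · exact Or.inl ⟨by omega, hEmono q (deg (BFormula.neg φ) + 1) _ (by omega) h1 hwit⟩
    · exact Or.inr ⟨by omega, hEmono q (deg (BFormula.neg ψ) + 1) _ (by omega) h1 hwit⟩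
  -- Z lemmas
  have hZdec : ∀ n q, Zit A Y (n + 1) q ⊆ Zit A Y n q := by
    intro n q; exact Set.inter_subset_left
  have hZanti : ∀ m n q, m ≤ n → Zit A Y n q ⊆ Zit A Y m q := by
    intro m n q
    induction n with
    | zero =>
      intro hmn
      have hm0 : m = 0 := Nat.le_zero.mp hmn
      subst hm0
      exact subset_rfl
    | succ p ih =>
      intro hmn
      rcases Nat.lt_or_ge m (p + 1) with hl | hg
      · exact (hZdec p q).trans (ih (by omega))
      · have : m = p + 1 := by omega
        subst this; exact subset_rfl
  have hZA : ∀ n q, A ⊆ Zit A Y n q := by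
    intro n
    induction n with
    | zero => exact hYA
    | succ p ih =>
      intro q φ hφ
      exact ⟨ih q hφ, CSF.base (Set.mem_union_left _ hφ)⟩
  have hZb : ∀ n q χ, BFormula.boxb χ ∈ Zit A Y n (q + 1) → χ ∈ Zit A Y n q := by
    intro n
    induction n with
    | zero => exact hYb
    | succ p ih =>
      intro q χ hχ
      obtain ⟨h1, _⟩ := hχ
      exact ⟨ih q χ h1, CSF.base (Set.mem_union_right _ h1)⟩
  have hZand : ∀ n q φ ψ, BFormula.and φ ψ ∈ Zit A Y n q →
      φ ∈ Zit A Y n q ∧ ψ ∈ Zit A Y n q := by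
    intro n
    induction n with
    | zero => exact hYand
    | succ p ih =>
      intro q φ ψ hm
      obtain ⟨h1, h2⟩ := hm
      obtain ⟨hφ, hψ⟩ := ih q φ ψ h1
      exact ⟨⟨hφ, CSF.andl h2⟩, ⟨hψ, CSF.andr h2⟩⟩
  have hZnn : ∀ n q φ, BFormula.neg (BFormula.neg φ) ∈ Zit A Y n q → φ ∈ Zit A Y n q := by
    intro n
    induction n with
    | zero => exact hYnn
    | succ p ih =>
      intro q φ hm
      obtain ⟨h1, h2⟩ := hm
      exact ⟨ih q φ h1, CSF.negE (CSF.negE h2)⟩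
  -- the limit
  set L : ℕ → Set BFormula := fun q => ⋂ n, Zit A Y n q with hLdef
  have hLsub : ∀ n q, L q ⊆ Zit A Y n q := by
    intro n q; exact Set.iInter_subset _ n
  have hLE0 : ∀ q, L q ⊆ Egrid S k q 0 := by
    intro q
    exact (hLsub 0 q).trans (hYE0 q)
  have hZfin : ∀ n q, (Zit A Y n q).Finite := by
    intro n q
    obtain ⟨v, _, hccs⟩ := hEccs q 0 (Nat.zero_le _)
    exact hccs.1.subset ((hZanti 0 n q (Nat.zero_le _)).trans (hYE0 q))
  -- stabilization
  have hstab : ∀ q, ∃ n₀, Zit A Y n₀ q = L q := by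
    intro q
    obtain ⟨n₀, hn₀⟩ : ∃ n₀, (Zit A Y n₀ q).ncard
        = sInf (Set.range fun n => (Zit A Y n q).ncard) := by
      have hmem := Nat.sInf_mem (Set.range_nonempty (fun n => (Zit A Y n q).ncard))
      obtain ⟨n₀, hn₀⟩ := hmem
      exact ⟨n₀, hn₀⟩
    have heq : ∀ m, n₀ ≤ m → Zit A Y m q = Zit A Y n₀ q := by
      intro m hm
      exact Set.eq_of_subset_of_ncard_le (hZanti n₀ m q hm)
        (by rw [hn₀]; exact Nat.sInf_le ⟨m, rfl⟩) (hZfin n₀ q)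
    refine ⟨n₀, ?_⟩
    apply Set.Subset.antisymm ?_ (hLsub n₀ q)
    intro φ hφ
    apply Set.mem_iInter.2
    intro n
    rcases le_total n n₀ with hn | hn
    · exact hZanti n n₀ q hn hφ
    · rw [heq n hn]; exact hφ
  -- final verification
  refine ⟨L, fun q => ?_⟩
  obtain ⟨v0, _, hccs0⟩ := hEccs q 0 (Nat.zero_le _)
  obtain ⟨n₀, hn₀⟩ := hstab (q + 1)
  refine ⟨hccs0.1.subset (hLE0 q), ?_, ?_, ?_, ?_, ?_, ?_, ?_⟩
  · -- base inclusion
    apply Set.union_subset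
    · intro φ hφ
      exact Set.mem_iInter.2 fun n => hZA n q hφ
    · intro φ hφ
      have hφ' : BFormula.boxb φ ∈ L (q + 1) := hφ
      exact Set.mem_iInter.2 fun n => hZb n q φ (Set.mem_iInter.1 hφ' n)
  · -- CSF condition
    intro φ hφ
    have h1 : φ ∈ Zit A Y (n₀ + 1) q := Set.mem_iInter.1 hφ (n₀ + 1)
    have h2 : CSF (A ∪ boxbInv (Zit A Y n₀ (q + 1))) φ := h1.2
    rw [hn₀] at h2
    exact h2
  · -- and-closure
    intro φ ψ hm
    constructor
    · exact Set.mem_iInter.2 fun n => (hZand n q φ ψ (Set.mem_iInter.1 hm n)).1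
    · exact Set.mem_iInter.2 fun n => (hZand n q φ ψ (Set.mem_iInter.1 hm n)).2
  · -- negand closure
    intro φ ψ hm
    have h0 : BFormula.neg (BFormula.and φ ψ) ∈ Y q := Set.mem_iInter.1 hm 0
    have hCSFm : ∀ n, CSF (A ∪ boxbInv (Zit A Y n (q + 1))) (BFormula.neg (BFormula.and φ ψ)) := by
      intro n
      exact (Set.mem_iInter.1 hm (n + 1)).2
    rcases hYna q φ ψ h0 with hwit | hwit
    · left
      apply Set.mem_iInter.2
      intro n
      induction n with
      | zero => exact hwit
      | succ p ih => exact ⟨ih, CSF.negandl (hCSFm p)⟩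
    · right
      apply Set.mem_iInter.2
      intro n
      induction n with
      | zero => exact hwit
      | succ p ih => exact ⟨ih, CSF.negandr (hCSFm p)⟩
  · -- negneg closure
    intro φ hm
    exact Set.mem_iInter.2 fun n => hZnn n q φ (Set.mem_iInter.1 hm n)
  · -- no falsum
    intro hbot
    exact hccs0.2.2.2.2.2.2.1 (hLE0 q hbot)
  · -- consistency
    intro φ hneg hφ
    exact hccs0.2.2.2.2.2.2.2 φ (hLE0 q hneg) (hLE0 q hφ)

/-- Loop and existence of an infinite window: if `(T_i)_{0≤i≤N}` is a sequence of
`d(w)`-windows for `w`, each continuing the previous one, and some window repeats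
(`T_h = T_{h+δ}` with `δ ≠ 0` and `h + δ ≤ N`), then there exists an `∞`-window
for `w`. -/
theorem stmt19 (u w : Set BFormula) (hu : u.Finite) (hw : CCS u w)
    (N : ℕ) (T : ℕ → ℕ → Set BFormula)
    (hwin : ∀ i ≤ N, IsWindow w (degS w) (T i))
    (hcont : ∀ i < N, Continues w (degS w) (T i) (T (i + 1)))
    (h δ : ℕ) (hδ : δ ≠ 0) (hhδ : h + δ ≤ N) (hrep : T h = T (h + δ)) :
    ∃ ws : ℕ → Set BFormula, IsInfWindow w ws := by
  classical
  have hδpos : 0 < δ := Nat.pos_of_ne_zero hδ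
  -- the infinite periodic grid of windows
  set ρ : ℕ → ℕ := fun j => if j < h + δ then j else h + (j - h) % δ with hρdef
  set S : ℕ → ℕ → Set BFormula := fun j => T (ρ j) with hSdef
  have hρle : ∀ j, ρ j ≤ N := by
    intro j
    simp only [hρdef]
    split
    · omega
    · have := Nat.mod_lt (j - h) hδpos
      omega
  have hSwin : ∀ j, IsWindow w (degS w) (S j) := fun j => hwin _ (hρle j)
  have wrap : Continues w (degS w) (T (h + δ - 1)) (T h) := by
    have h1 : h + δ - 1 < N := by omega
    have h2 := hcont _ h1
    rw [show h + δ - 1 + 1 = h + δ by omega, ← hrep] at h2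
    exact h2
  have hScont : ∀ j, Continues w (degS w) (S j) (S (j + 1)) := by
    intro j
    simp only [hSdef, hρdef]
    by_cases hc1 : j + 1 < h + δ
    · rw [if_pos (by omega : j < h + δ), if_pos hc1]
      exact hcont j (by omega)
    · by_cases hc2 : j < h + δ
      · rw [if_pos hc2, if_neg hc1]
        have e2 : j + 1 - h = δ := by omega
        rw [e2, Nat.mod_self, Nat.add_zero, show j = h + δ - 1 by omega]
        exact wrap
      · rw [if_neg hc2, if_neg hc1]
        have hr : (j - h) % δ < δ := Nat.mod_lt _ hδpos
        have e1 : (j + 1 - h) % δ = ((j - h) % δ + 1) % δ := by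
          rw [show j + 1 - h = j - h + 1 by omega]
          conv_lhs => rw [← Nat.div_add_mod (j - h) δ]
          rw [Nat.add_assoc, Nat.mul_add_mod]
        by_cases hc3 : (j - h) % δ + 1 = δ
        · have e2 : (j + 1 - h) % δ = 0 := by
            rw [e1, hc3, Nat.mod_self]
          rw [e2, Nat.add_zero, show (j - h) % δ = δ - 1 by omega,
            show h + (δ - 1) = h + δ - 1 by omega]
          exact wrap
        · have e2 : (j + 1 - h) % δ = (j - h) % δ + 1 := by
            rw [e1]
            exact Nat.mod_eq_of_lt (by omega)
          rw [e2, show h + ((j - h) % δ + 1) = h + (j - h) % δ + 1 by omega]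
          exact hcont _ (by omega)
  -- apply the core lemma
  have hdegA : ∀ φ ∈ boxaInv w, deg φ + 1 ≤ degS w := by
    intro φ hφ
    have hb : BFormula.boxa φ ∈ w := hφ
    have := deg_le_degS hw.1 hb
    simpa [deg] using this
  obtain ⟨ws, hws⟩ := windows_to_inf (degS w) (boxaInv w) hdegA S
    (fun j => (hSwin j).1)
    (fun j i hik => (hSwin j).2 i hik)
    (fun j i h1 h2 => (hScont j).2.2 i h1 h2)
  exact ⟨ws, hws⟩
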